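/- With the oxidation setup g = V ⊕ ḡ ⊕ V* and bracket as above, suppose the bracket is a Lie bracket. Define the 2-form ω on g by ω((v,X,α),(w,Y,γ)) = ω̄(X,Y) + α(w) - γ(v). Then ω is closed (a Chevalley–Eilenberg 2-cocycle of g) if and only if both: (1) ω̄(ν(v,w), X) = g(v,X)(w) - g(w,X)(v) for all v,w ∈ V, X ∈ ḡ; and (2) β(X,Y)(v) = -ω̄(f(v,X),Y) - ω̄(X,f(v,Y)) for all v ∈ V, X,Y ∈ ḡ. -/

import Mathlib

/-!
Expanding `ω([a,b],c)` cyclically splits the cocycle sum of `ω` into four groups: the cocycle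
sum of `ω̄` on `ḡ`, the cyclic sum `τ(v,w)(u) + τ(w,u)(v) + τ(u,v)(w)`, three defects of
identity (1) and three defects of identity (2). The first group vanishes by hypothesis and the
second because it is an alternating trilinear form on the plane `V`. Evaluating on
`(v,0,0), (w,0,0), (0,X,0)`, resp. `(v,0,0), (0,X,0), (0,Y,0)`, isolates a single defect.
-/

open Module

theorem trilinear_eq_zero_of_finrank_le_two {K V M : Type*} [Field K] [AddCommGroup V]
    [Module K V] [FiniteDimensional K V] [AddCommGroup M] [Module K M]
    (hV : finrank K V ≤ 2) (T : V →ₗ[K] V →ₗ[K] V →ₗ[K] M)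
    (h₁₂ : T.IsAlt) (h₂₃ : ∀ v, (T v).IsAlt) : T = 0 := by
  have h₁₃ (v w : V) : T v w v = 0 := by
    rw [← h₁₂.neg, LinearMap.neg_apply, h₂₃, neg_zero]
  let b := finBasis K V
  refine b.ext fun i => b.ext fun j => b.ext fun k => ?_
  -- pigeonhole on three indices in `Fin (finrank K V)`
  obtain rfl | rfl | rfl : i = j ∨ j = k ∨ i = k := by omega
  · simp [h₁₂.self_eq_zero]
  · exact h₂₃ _ _
  · exact h₁₃ _ _

theorem dual_cyclic_sum_eq_zero_of_finrank_le_two {K V : Type*} [Field K] [AddCommGroup V]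
    [Module K V] [FiniteDimensional K V] (hV : finrank K V ≤ 2)
    (τ : V →ₗ[K] V →ₗ[K] Dual K V) (hτ : τ.IsAlt) (v w u : V) :
    τ v w u + τ w u v + τ u v w = 0 := by
  let T : V →ₗ[K] V →ₗ[K] V →ₗ[K] K :=
    τ + (LinearMap.lflip.toLinearMap ∘ₗ τ).flip + LinearMap.lflip.toLinearMap ∘ₗ τ.flip
  have hT (v w u : V) : T v w u = τ v w u + τ w u v + τ u v w := rfl
  have hT₁₂ : T.IsAlt := fun v => by
    ext u
    simp only [hT, hτ.self_eq_zero, ← hτ.neg u v]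
    simp
  have hT₂₃ (v : V) : (T v).IsAlt := fun w => by
    simp only [hT, hτ.self_eq_zero, ← hτ.neg w v]
    simp
  rw [← hT, trilinear_eq_zero_of_finrank_le_two hV T hT₁₂ hT₂₃]
  rfl

section Oxidation

variable {R V L : Type*} [CommRing R] [AddCommGroup V] [Module R V] [LieRing L] [LieAlgebra R L]

def oxidationBracket (ν : V →ₗ[R] V →ₗ[R] L) (f : V →ₗ[R] L →ₗ[R] L)
    (gm : V →ₗ[R] L →ₗ[R] Dual R V) (τ : V →ₗ[R] V →ₗ[R] Dual R V)
    (β : L →ₗ[R] L →ₗ[R] Dual R V) (p q : V × L × Dual R V) : V × L × Dual R V :=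
  (0, ν p.1 q.1 + f p.1 q.2.1 - f q.1 p.2.1 + ⁅p.2.1, q.2.1⁆,
    gm p.1 q.2.1 - gm q.1 p.2.1 + τ p.1 q.1 + β p.2.1 q.2.1)

def oxidationForm (ωb : L →ₗ[R] L →ₗ[R] R) (p q : V × L × Dual R V) : R :=
  ωb p.2.1 q.2.1 + p.2.2 q.1 - q.2.2 p.1

variable {ωb : L →ₗ[R] L →ₗ[R] R} {ν : V →ₗ[R] V →ₗ[R] L} {f : V →ₗ[R] L →ₗ[R] L}
  {gm : V →ₗ[R] L →ₗ[R] Dual R V} {τ : V →ₗ[R] V →ₗ[R] Dual R V} {β : L →ₗ[R] L →ₗ[R] Dual R V}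

theorem oxidationForm_cyclic_sum (hωb : ωb.IsAlt) (v w u : V) (X Y Z : L) (α γ δ : Dual R V) :
    let p := (v, X, α); let q := (w, Y, γ); let r := (u, Z, δ)
    let Br := oxidationBracket ν f gm τ β
    oxidationForm ωb (Br p q) r + oxidationForm ωb (Br q r) p + oxidationForm ωb (Br r p) q =
      (ωb ⁅X, Y⁆ Z + ωb ⁅Y, Z⁆ X + ωb ⁅Z, X⁆ Y) + (τ v w u + τ w u v + τ u v w)
        + (ωb (ν v w) Z - (gm v Z w - gm w Z v)) + (ωb (ν w u) X - (gm w X u - gm u X w))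
        + (ωb (ν u v) Y - (gm u Y v - gm v Y u))
        + (β X Y u + ωb (f u X) Y + ωb X (f u Y)) + (β Y Z v + ωb (f v Y) Z + ωb Y (f v Z))
        + (β Z X w + ωb (f w Z) X + ωb Z (f w X)) := by
  simp only [oxidationForm, oxidationBracket, map_add, map_sub, LinearMap.add_apply,
    LinearMap.sub_apply, map_zero, sub_zero, ← hωb.neg (f _ _)]
  ring

theorem oxidationForm_isCocycle_iff (hωb : ωb.IsAlt)
    (hωcl : ∀ X Y Z : L, ωb ⁅X, Y⁆ Z + ωb ⁅Y, Z⁆ X + ωb ⁅Z, X⁆ Y = 0)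
    (hτ : ∀ v w u : V, τ v w u + τ w u v + τ u v w = 0) :
    (∀ p q r, oxidationForm ωb (oxidationBracket ν f gm τ β p q) r
        + oxidationForm ωb (oxidationBracket ν f gm τ β q r) p
        + oxidationForm ωb (oxidationBracket ν f gm τ β r p) q = 0) ↔
      (∀ (v w : V) (X : L), ωb (ν v w) X = gm v X w - gm w X v) ∧
        ∀ (v : V) (X Y : L), β X Y v = -ωb (f v X) Y - ωb X (f v Y) := by
  refine ⟨fun h => ⟨fun v w X => ?_, fun v X Y => ?_⟩, ?_⟩
  · have h₁ : ωb (ν v w) X - (gm v X w - gm w X v) = 0 := by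
      simpa [oxidationForm_cyclic_sum hωb] using h (v, 0, 0) (w, 0, 0) (0, X, 0)
    linear_combination h₁
  · have h₂ : β X Y v + ωb (f v X) Y + ωb X (f v Y) = 0 := by
      simpa [oxidationForm_cyclic_sum hωb] using h (v, 0, 0) (0, X, 0) (0, Y, 0)
    linear_combination h₂
  · rintro ⟨h₁, h₂⟩ ⟨v, X, α⟩ ⟨w, Y, γ⟩ ⟨u, Z, δ⟩
    rw [oxidationForm_cyclic_sum hωb]
    simp only [hωcl, hτ, h₁, h₂]
    ring

end Oxidation

theorem stmt_15_general (V gb : Type*) [AddCommGroup V] [Module ℝ V]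
    [FiniteDimensional ℝ V] (hV : Module.finrank ℝ V = 2)
    [LieRing gb] [LieAlgebra ℝ gb]
    (ωb : gb →ₗ[ℝ] gb →ₗ[ℝ] ℝ) (hωalt : ∀ x, ωb x x = 0)
    (hωcl : ∀ x y z : gb, ωb ⁅x, y⁆ z + ωb ⁅y, z⁆ x + ωb ⁅z, x⁆ y = 0)
    (ν : V →ₗ[ℝ] V →ₗ[ℝ] gb)
    (τ : V →ₗ[ℝ] V →ₗ[ℝ] Module.Dual ℝ V) (hτ : ∀ v, τ v v = 0)
    (f : V →ₗ[ℝ] gb →ₗ[ℝ] gb)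
    (gm : V →ₗ[ℝ] gb →ₗ[ℝ] Module.Dual ℝ V)
    (β : gb →ₗ[ℝ] gb →ₗ[ℝ] Module.Dual ℝ V)
    (Br : (V × gb × Module.Dual ℝ V) → (V × gb × Module.Dual ℝ V) →
      (V × gb × Module.Dual ℝ V))
    (hBr : ∀ p q, Br p q =
      ((0 : V), ν p.1 q.1 + f p.1 q.2.1 - f q.1 p.2.1 + ⁅p.2.1, q.2.1⁆,
        gm p.1 q.2.1 - gm q.1 p.2.1 + τ p.1 q.1 + β p.2.1 q.2.1))
    (ω : (V × gb × Module.Dual ℝ V) → (V × gb × Module.Dual ℝ V) → ℝ)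
    (hω : ∀ p q, ω p q = ωb p.2.1 q.2.1 + p.2.2 q.1 - q.2.2 p.1) :
    (∀ p q r, ω (Br p q) r + ω (Br q r) p + ω (Br r p) q = 0) ↔
      ((∀ (v w : V) (x : gb), ωb (ν v w) x = gm v x w - gm w x v) ∧
       (∀ (v : V) (x y : gb), β x y v = -ωb (f v x) y - ωb x (f v y))) := by
  obtain rfl : Br = oxidationBracket ν f gm τ β := funext₂ hBr
  obtain rfl : ω = oxidationForm ωb := funext₂ hω
  exact oxidationForm_isCocycle_iff hωalt hωcl
    (dual_cyclic_sum_eq_zero_of_finrank_le_two hV.le τ hτ)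

/-- With the oxidation setup `g = V ⊕ ḡ ⊕ V*` and the bracket determined
by `ν, τ, f, g, β` (assumed to satisfy the Jacobi identity), the 2-form
`ω((v,X,α),(w,Y,γ)) = ω̄(X,Y) + α(w) - γ(v)` is closed (a Chevalley–Eilenberg
2-cocycle of `g`) if and only if
(1) `ω̄(ν(v,w), X) = g(v,X)(w) - g(w,X)(v)` for all `v, w ∈ V`, `X ∈ ḡ`, and
(2) `β(X,Y)(v) = -ω̄(f(v,X),Y) - ω̄(X,f(v,Y))` for all `v ∈ V`, `X, Y ∈ ḡ`. -/
theorem stmt_15 (V gb : Type*) [AddCommGroup V] [Module ℝ V]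
    [FiniteDimensional ℝ V] (hV : Module.finrank ℝ V = 2)
    [LieRing gb] [LieAlgebra ℝ gb]
    (ωb : gb →ₗ[ℝ] gb →ₗ[ℝ] ℝ) (hωalt : ∀ x, ωb x x = 0)
    (hωcl : ∀ x y z : gb, ωb ⁅x, y⁆ z + ωb ⁅y, z⁆ x + ωb ⁅z, x⁆ y = 0)
    (ν : V →ₗ[ℝ] V →ₗ[ℝ] gb) (hν : ∀ v, ν v v = 0)
    (τ : V →ₗ[ℝ] V →ₗ[ℝ] Module.Dual ℝ V) (hτ : ∀ v, τ v v = 0)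
    (f : V →ₗ[ℝ] gb →ₗ[ℝ] gb)
    (gm : V →ₗ[ℝ] gb →ₗ[ℝ] Module.Dual ℝ V)
    (β : gb →ₗ[ℝ] gb →ₗ[ℝ] Module.Dual ℝ V) (hβ : ∀ x, β x x = 0)
    (Br : (V × gb × Module.Dual ℝ V) → (V × gb × Module.Dual ℝ V) →
      (V × gb × Module.Dual ℝ V))
    (hBr : ∀ p q, Br p q =
      ((0 : V), ν p.1 q.1 + f p.1 q.2.1 - f q.1 p.2.1 + ⁅p.2.1, q.2.1⁆,
        gm p.1 q.2.1 - gm q.1 p.2.1 + τ p.1 q.1 + β p.2.1 q.2.1))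
    (hJac : ∀ p q r, Br (Br p q) r + Br (Br q r) p + Br (Br r p) q = 0)
    (ω : (V × gb × Module.Dual ℝ V) → (V × gb × Module.Dual ℝ V) → ℝ)
    (hω : ∀ p q, ω p q = ωb p.2.1 q.2.1 + p.2.2 q.1 - q.2.2 p.1) :
    (∀ p q r, ω (Br p q) r + ω (Br q r) p + ω (Br r p) q = 0) ↔
      ((∀ (v w : V) (x : gb), ωb (ν v w) x = gm v x w - gm w x v) ∧
       (∀ (v : V) (x y : gb), β x y v = -ωb (f v x) y - ωb x (f v y))) :=
  stmt_15_general V gb hV ωb hωalt hωcl ν τ hτ f gm β Br hBr ω hω
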